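/- arXiv:0910.0793 — 3 statements merged into one kernel-verified Lean document; each statement's English description precedes it below -/
import Mathlib

section
/- Let Δ = Δ_0 + Δ_1 + ⋯ + Δ_k be a Minkowski sum decomposition of a reflexive polytope Δ ⊂ ℝ^d into lattice polytopes, and define ∇̂_0 = Conv({u − Σ_{i=1}^k min⟨Δ_i,u⟩ e_i* : u ∈ Δ*} ∪ {e_1*, …, e_k*}) ⊂ ℝ^d ⊕ ℝ^k and ∇̂_i = ∇̂_0 − e_i* for i = 1,…,k. Then the set of lattice points of ∇̂_0 equals {n − Σ_{i=1}^k min⟨Δ_i,n⟩ e_i* : n ∈ Δ* ∩ ℤ^d} ∪ {e_1*, …, e_k*}, so l(∇̂_0) = l(Δ*) + k; moreover l(∇̂_0 ⊎ ∇̂_1 ⊎ ⋯ ⊎ ∇̂_k) = (k+1)·l(Δ*) + k². -/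
open scoped Pointwise
open Set

noncomputable section

/-- The standard pairing on `ℝ^n`. -/
def pairing {n : ℕ} (x y : Fin n → ℝ) : ℝ := ∑ i, x i * y i

/-- A point of `ℝ^n` lying in the lattice `ℤ^n`. -/
def IsLatticePt {n : ℕ} (x : Fin n → ℝ) : Prop := ∀ i, ∃ z : ℤ, x i = (z : ℝ)

/-- A lattice polytope: the convex hull of finitely many lattice points. -/
def IsLatticePolytope {n : ℕ} (P : Set (Fin n → ℝ)) : Prop :=
  ∃ S : Set (Fin n → ℝ), S.Finite ∧ (∀ x ∈ S, IsLatticePt x) ∧ P = convexHull ℝ S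

/-- The dual polytope `P* = {y | ⟨x,y⟩ ≥ -1 ∀ x ∈ P}`. -/
def polarDual {n : ℕ} (P : Set (Fin n → ℝ)) : Set (Fin n → ℝ) :=
  {y | ∀ x ∈ P, -1 ≤ pairing x y}

/-- A reflexive polytope. -/
def IsReflexive {n : ℕ} (P : Set (Fin n → ℝ)) : Prop :=
  IsLatticePolytope P ∧ (0 : Fin n → ℝ) ∈ interior P ∧ IsLatticePolytope (polarDual P)

/-- `min⟨P, u⟩ = min_{x ∈ P} ⟨x, u⟩`. -/
def minPair {n : ℕ} (P : Set (Fin n → ℝ)) (u : Fin n → ℝ) : ℝ :=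
  sInf ((fun x => pairing x u) '' P)

/-- The real vector space `ℝ^d ⊕ ℝ^k`. -/
abbrev Vdk (d k : ℕ) := (Fin d → ℝ) × (Fin k → ℝ)

/-- The pairing on `ℝ^d ⊕ ℝ^k` (sum of the two standard pairings). -/
def pairingV {d k : ℕ} (x y : Vdk d k) : ℝ := pairing x.1 y.1 + pairing x.2 y.2

def IsLatticePtV {d k : ℕ} (x : Vdk d k) : Prop := IsLatticePt x.1 ∧ IsLatticePt x.2

def IsLatticePolytopeV {d k : ℕ} (P : Set (Vdk d k)) : Prop :=
  ∃ S : Set (Vdk d k), S.Finite ∧ (∀ x ∈ S, IsLatticePtV x) ∧ P = convexHull ℝ S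

def polarDualV {d k : ℕ} (P : Set (Vdk d k)) : Set (Vdk d k) :=
  {y | ∀ x ∈ P, -1 ≤ pairingV x y}

def IsReflexiveV {d k : ℕ} (P : Set (Vdk d k)) : Prop :=
  IsLatticePolytopeV P ∧ (0 : Vdk d k) ∈ interior P ∧ IsLatticePolytopeV (polarDualV P)

/-- The Cayley cone `σ̄ = {(t₀Δ₀ + ⋯ + t_kΔ_k, t₀, …, t_k) : tᵢ ≥ 0} ⊆ ℝ^d ⊕ ℝ^{k+1}`. -/
def cayleyCone {d k : ℕ} (Δ : Fin (k+1) → Set (Fin d → ℝ)) : Set (Vdk d (k+1)) :=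
  {p | (∀ i, 0 ≤ p.2 i) ∧ p.1 ∈ ∑ i, p.2 i • Δ i}

/-- The dual cone of a cone in `ℝ^d ⊕ ℝ^k`. -/
def dualConeV {d k : ℕ} (σ : Set (Vdk d k)) : Set (Vdk d k) :=
  {y | ∀ x ∈ σ, 0 ≤ pairingV x y}

open Filter Topology

/-!
Write `ψᵢ(x) = -min⟨Δᵢ,x⟩`, so that `ψ₀ + ⋯ + ψ_k = -min⟨Δ,x⟩`, and for `p = (x,y)` let
`bᵢ(p) = yᵢ - ψᵢ₊₁(x)` be the height of `p` above the lift `(x, ψ₁(x), …, ψ_k(x))`.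
Since every `ψᵢ` is convex, the conditions `x ∈ Δ*`, `Σ_{i∈S} bᵢ - min⟨Δ,x⟩ ≤ 1` and
`-Σ_{i∈S} bᵢ ≤ c` (for all `S ⊆ {1,…,k}`) cut out a convex set; it contains the generators of `∇̂₀`
for `c = 0` and their translates by `-eⱼ*` for `c = 1`, hence `∇̂₀`, resp. `∇̂₀ ⊎ ⋯ ⊎ ∇̂_k`.
At a lattice point, reflexivity gives `min⟨Δ,x⟩ ∈ {0,-1}` with `0` only at `x = 0`, and `b` is
integral; the constraints then say that the positive part of `b` is `0` (or a unit vector if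
`x = 0`) and its negative part is `0` (or a unit vector if `c = 1`). This lists the lattice points,
and counting them is bookkeeping.
-/

section Lattice

variable {n : ℕ}

lemma pairing_eq_dotProduct (x y : Fin n → ℝ) : pairing x y = x ⬝ᵥ y := rfl

lemma isLatticePt_iff_forall_mem_range {x : Fin n → ℝ} :
    IsLatticePt x ↔ ∀ i, x i ∈ (Int.castRingHom ℝ).range := by
  simp [IsLatticePt, eq_comm]

lemma isLatticePt_iff_mem_span {x : Fin n → ℝ} :
    IsLatticePt x ↔ x ∈ Submodule.span ℤ (range (Pi.basisFun ℝ (Fin n))) := by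
  rw [Module.Basis.mem_span_iff_repr_mem]
  simp [IsLatticePt, eq_comm]

lemma IsLatticePt.sub {x y : Fin n → ℝ} (hx : IsLatticePt x) (hy : IsLatticePt y) :
    IsLatticePt (x - y) :=
  isLatticePt_iff_mem_span.2 (sub_mem (isLatticePt_iff_mem_span.1 hx)
    (isLatticePt_iff_mem_span.1 hy))

lemma IsLatticePt.neg {x : Fin n → ℝ} (hx : IsLatticePt x) : IsLatticePt (-x) :=
  isLatticePt_iff_mem_span.2 (neg_mem (isLatticePt_iff_mem_span.1 hx))

lemma IsLatticePt.pairing_mem {x y : Fin n → ℝ} (hx : IsLatticePt x) (hy : IsLatticePt y) :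
    pairing x y ∈ (Int.castRingHom ℝ).range :=
  Subring.sum_mem _ fun i _ => Subring.mul_mem _ (isLatticePt_iff_forall_mem_range.1 hx i)
    (isLatticePt_iff_forall_mem_range.1 hy i)

lemma isLatticePt_single (i : Fin n) : IsLatticePt (Pi.single i 1 : Fin n → ℝ) :=
  isLatticePt_iff_mem_span.2 (by
    simpa using Submodule.subset_span (mem_range_self (f := Pi.basisFun ℝ (Fin n)) i))

lemma Bornology.IsBounded.finite_setOf_isLatticePt {P : Set (Fin n → ℝ)}
    (hP : Bornology.IsBounded P) : {x ∈ P | IsLatticePt x}.Finite :=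
  (ZSpan.setFinite_inter (Pi.basisFun ℝ (Fin n)) hP).subset
    fun _ hx => ⟨hx.1, isLatticePt_iff_mem_span.1 hx.2⟩

lemma IsLatticePolytope.isBounded {P : Set (Fin n → ℝ)} (hP : IsLatticePolytope P) :
    Bornology.IsBounded P := by
  obtain ⟨S, hS, -, rfl⟩ := hP
  exact (hS.isCompact_convexHull (𝕜 := ℝ)).isBounded

lemma one_le_of_mem_range_intCast {r : ℝ} (hr : r ∈ (Int.castRingHom ℝ).range) (h : 0 < r) :
    1 ≤ r := by
  obtain ⟨z, rfl⟩ := hr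
  simp only [eq_intCast, Int.cast_pos] at h ⊢
  exact_mod_cast h

end Lattice

lemma IsLatticePtV.sub {d k : ℕ} {x y : Vdk d k} (hx : IsLatticePtV x) (hy : IsLatticePtV y) :
    IsLatticePtV (x - y) :=
  ⟨hx.1.sub hy.1, hx.2.sub hy.2⟩

section MinPair

variable {n : ℕ} {P : Set (Fin n → ℝ)}

lemma IsLatticePolytope.exists_isMinOn (hP : IsLatticePolytope P) (hne : P.Nonempty)
    (u : Fin n → ℝ) : ∃ x ∈ P, IsLatticePt x ∧ IsMinOn (pairing · u) P x := by
  obtain ⟨S, hSfin, hSlat, rfl⟩ := hP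
  obtain ⟨x, hxS, hmin⟩ :=
    S.exists_min_image (pairing · u) hSfin (convexHull_nonempty_iff.1 hne)
  have hhalf : Convex ℝ {y | pairing x u ≤ pairing y u} :=
    convex_halfSpace_ge ⟨fun y z => add_dotProduct y z u, fun c y => smul_dotProduct c y u⟩ _
  exact ⟨x, subset_convexHull ℝ S hxS, hSlat x hxS,
    isMinOn_iff.2 fun y hy => convexHull_min hmin hhalf hy⟩

lemma minPair_eq_of_isMinOn {u x : Fin n → ℝ} (hx : x ∈ P) (h : IsMinOn (pairing · u) P x) :
    minPair P u = pairing x u :=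
  IsLeast.csInf_eq ⟨⟨x, hx, rfl⟩, by rintro _ ⟨y, hy, rfl⟩; exact isMinOn_iff.1 h y hy⟩

lemma IsLatticePolytope.minPair_le (hP : IsLatticePolytope P) {y : Fin n → ℝ} (hy : y ∈ P)
    (u : Fin n → ℝ) : minPair P u ≤ pairing y u := by
  obtain ⟨x, hx, -, hmin⟩ := hP.exists_isMinOn ⟨y, hy⟩ u
  rw [minPair_eq_of_isMinOn hx hmin]
  exact isMinOn_iff.1 hmin y hy

lemma minPair_mem_range (hP : IsLatticePolytope P) (hne : P.Nonempty) {u : Fin n → ℝ}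
    (hu : IsLatticePt u) : minPair P u ∈ (Int.castRingHom ℝ).range := by
  obtain ⟨x, hx, hxl, hmin⟩ := hP.exists_isMinOn hne u
  rw [minPair_eq_of_isMinOn hx hmin]
  exact hxl.pairing_mem hu

lemma minPair_zero (hne : P.Nonempty) : minPair P 0 = 0 := by
  simp [minPair, pairing_eq_dotProduct, hne.image_const]

lemma neg_one_le_minPair (hne : P.Nonempty) {u : Fin n → ℝ} (hu : u ∈ polarDual P) :
    -1 ≤ minPair P u :=
  le_csInf (hne.image _) (by rintro _ ⟨x, hx, rfl⟩; exact hu x hx)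

lemma convexOn_neg_minPair (hP : IsLatticePolytope P) (hne : P.Nonempty) :
    ConvexOn ℝ univ fun u => -minPair P u := by
  refine ⟨convex_univ, fun u _ v _ a b ha hb _ => ?_⟩
  obtain ⟨x, hx, -, hmin⟩ := hP.exists_isMinOn hne (a • u + b • v)
  have hu := mul_le_mul_of_nonneg_left (hP.minPair_le hx u) ha
  have hv := mul_le_mul_of_nonneg_left (hP.minPair_le hx v) hb
  simp only [minPair_eq_of_isMinOn hx hmin, pairing_eq_dotProduct, dotProduct_add,
    dotProduct_smul, smul_eq_mul] at hu hv ⊢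
  linarith

lemma minPair_neg (hP : IsLatticePolytope P) (h0 : (0 : Fin n → ℝ) ∈ interior P)
    {u : Fin n → ℝ} (hu : u ≠ 0) : minPair P u < 0 := by
  have hcont : Tendsto (fun c : ℝ => c • -u) (𝓝 0) (𝓝 0) := by
    simpa using (continuous_id.smul continuous_const).tendsto (0 : ℝ) (f := fun c : ℝ => c • -u)
  obtain ⟨c, hc, hcP⟩ : ∃ c > 0, c • -u ∈ P :=
    (hcont.eventually (mem_interior_iff_mem_nhds.1 h0)).exists_gt
  have huu : 0 < u ⬝ᵥ u :=
    (Finset.sum_nonneg fun i _ => mul_self_nonneg (u i)).lt_of_ne'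
      (dotProduct_self_eq_zero.not.2 hu)
  calc minPair P u ≤ pairing (c • -u) u := hP.minPair_le hcP u
    _ = -(c * (u ⬝ᵥ u)) := by simp [pairing_eq_dotProduct]
    _ < 0 := neg_neg_of_pos (mul_pos hc huu)

lemma eq_zero_or_minPair_eq_neg_one (hP : IsLatticePolytope P)
    (h0 : (0 : Fin n → ℝ) ∈ interior P) {u : Fin n → ℝ} (hu : u ∈ polarDual P)
    (hl : IsLatticePt u) : u = 0 ∨ minPair P u = -1 := by
  have hne : P.Nonempty := ⟨0, interior_subset h0⟩
  refine or_iff_not_imp_left.2 fun hu0 => le_antisymm ?_ (neg_one_le_minPair hne hu)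
  have := one_le_of_mem_range_intCast (neg_mem (minPair_mem_range hP hne hl))
    (neg_pos.2 (minPair_neg hP h0 hu0))
  linarith

lemma pairing_sum_left {ι : Type*} (s : Finset ι) (x : ι → Fin n → ℝ) (u : Fin n → ℝ) :
    pairing (∑ i ∈ s, x i) u = ∑ i ∈ s, pairing (x i) u :=
  sum_dotProduct s x u

lemma minPair_sum {ι : Type*} [Fintype ι] {Δ : ι → Set (Fin n → ℝ)}
    (hlat : ∀ i, IsLatticePolytope (Δ i)) (hne : ∀ i, (Δ i).Nonempty) (u : Fin n → ℝ) :
    minPair (∑ i, Δ i) u = ∑ i, minPair (Δ i) u := by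
  choose x hxΔ _ hmin using fun i => (hlat i).exists_isMinOn (hne i) u
  refine IsLeast.csInf_eq ⟨⟨∑ i, x i, Set.finsetSum_mem_finsetSum _ _ _ fun i _ => hxΔ i, ?_⟩, ?_⟩
  · simp [pairing_sum_left, minPair_eq_of_isMinOn (hxΔ _) (hmin _)]
  · rintro _ ⟨z, hz, rfl⟩
    obtain ⟨g, hg, rfl⟩ := (Set.mem_fintype_sum _ _).1 hz
    simp only [pairing_sum_left]
    exact Finset.sum_le_sum fun i _ => (hlat i).minPair_le (hg i) u

lemma convex_polarDual (P : Set (Fin n → ℝ)) : Convex ℝ (polarDual P) := by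
  have : polarDual P = ⋂ x ∈ P, {y | -1 ≤ pairing x y} := by ext; simp [polarDual]
  rw [this]
  exact convex_iInter₂ fun x _ =>
    convex_halfSpace_ge ⟨fun y z => dotProduct_add x y z, fun c y => dotProduct_smul c x y⟩ _

lemma zero_mem_polarDual (P : Set (Fin n → ℝ)) : (0 : Fin n → ℝ) ∈ polarDual P :=
  fun x _ => by simp [pairing_eq_dotProduct]

end MinPair

lemma nonempty_fintypeSum {n : ℕ} {ι : Type*} [Fintype ι] {Δ : ι → Set (Fin n → ℝ)}
    (hne : ∀ i, (Δ i).Nonempty) : (∑ i, Δ i).Nonempty :=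
  ⟨∑ i, (hne i).some, Set.finsetSum_mem_finsetSum _ _ _ fun i _ => (hne i).some_mem⟩

lemma nonempty_of_fintypeSum_nonempty {ι : Type*} [Fintype ι] {Δ : ι → Set (Fin n → ℝ)}
    (h : (∑ i, Δ i).Nonempty) (i : ι) : (Δ i).Nonempty := by
  obtain ⟨x, hx⟩ := h
  obtain ⟨g, hg, -⟩ := (Set.mem_fintype_sum _ _).1 hx
  exact ⟨g i, hg i⟩

lemma convexOn_finsetSum {ι E : Type*} [AddCommGroup E] [Module ℝ E] {s : Set E}
    (hs : Convex ℝ s) (t : Finset ι) {f : ι → E → ℝ} (hf : ∀ i ∈ t, ConvexOn ℝ s (f i)) :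
    ConvexOn ℝ s fun x => ∑ i ∈ t, f i x := by
  classical
  induction t using Finset.induction_on with
  | empty => simpa using convexOn_const (0 : ℝ) hs
  | insert i t hi ih =>
    simp only [Finset.sum_insert hi]
    exact (hf i (t.mem_insert_self i)).add (ih fun j hj => hf j (Finset.mem_insert_of_mem hj))

section BasisOrZero

variable {k : ℕ}

/-- `e₀* := 0` and `eᵢ₊₁* := eᵢ*`: the vertices of the standard simplex in `ℝ^k`. -/
def basisOrZero (j : Fin (k+1)) : Fin k → ℝ := Fin.cases 0 (fun i => Pi.single i 1) j

@[simp] lemma basisOrZero_zero : basisOrZero (0 : Fin (k+1)) = 0 := rfl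

@[simp] lemma basisOrZero_succ (i : Fin k) : basisOrZero i.succ = Pi.single i 1 := rfl

lemma basisOrZero_nonneg (j : Fin (k+1)) : 0 ≤ basisOrZero j := by
  cases j using Fin.cases with
  | zero => simp
  | succ i => simp [Pi.single_nonneg]

lemma sum_basisOrZero_le_one (S : Finset (Fin k)) (j : Fin (k+1)) :
    ∑ i ∈ S, basisOrZero j i ≤ 1 := by
  cases j using Fin.cases with
  | zero => simp
  | succ a => rw [basisOrZero_succ, Finset.sum_pi_single']; split_ifs <;> norm_num

lemma basisOrZero_injective : Function.Injective (basisOrZero (k := k)) := by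
  intro a b h
  cases a using Fin.cases <;> cases b using Fin.cases
  case succ.succ i l => simpa [Pi.single_apply] using congrFun h i
  all_goals simp_all [eq_comm, funext_iff, Pi.single_apply]

lemma isLatticePt_basisOrZero (j : Fin (k+1)) : IsLatticePt (basisOrZero j) := by
  cases j using Fin.cases with
  | zero => exact fun _ => ⟨0, by simp⟩
  | succ i => exact isLatticePt_single i

lemma posPart_basisOrZero_sub {a j : Fin (k+1)} (h : a ≠ j) :
    (basisOrZero a - basisOrZero j)⁺ = basisOrZero a := by
  ext i
  cases a using Fin.cases <;> cases j using Fin.cases <;>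
    simp [Pi.single_apply] <;> split_ifs <;> simp_all

lemma exists_posPart_eq_basisOrZero {b : Fin k → ℝ} (hb : IsLatticePt b)
    (h : ∀ S : Finset (Fin k), ∑ i ∈ S, b i ≤ 1) : ∃ a, b⁺ = basisOrZero a := by
  by_cases hpos : ∃ i, 0 < b i
  · obtain ⟨i, hi⟩ := hpos
    have hint : ∀ l, 0 < b l → 1 ≤ b l := fun l =>
      one_le_of_mem_range_intCast (isLatticePt_iff_forall_mem_range.1 hb l)
    have hbi : b i = 1 := le_antisymm (by simpa using h {i}) (hint i hi)
    have hle : ∀ l ≠ i, b l ≤ 0 := fun l hl => by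
      by_contra! hl'
      have := h {l, i}
      rw [Finset.sum_pair hl] at this
      linarith [hint l hl']
    refine ⟨i.succ, funext fun l => ?_⟩
    rw [basisOrZero_succ, Pi.posPart_apply, Pi.single_apply]
    split_ifs with hl
    · rw [hl, hbi, posPart_eq_self.2 zero_le_one]
    · exact posPart_eq_zero.2 (hle l hl)
  · push Not at hpos
    exact ⟨0, posPart_eq_zero.2 hpos⟩

end BasisOrZero

section Envelope

variable {d k : ℕ} (Δ : Fin (k+1) → Set (Fin d → ℝ))

/-- `u ↦ u − Σᵢ₌₁ᵏ min⟨Δᵢ,u⟩ eᵢ*`. -/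
def dualLift (u : Fin d → ℝ) : Vdk d k := (u, fun i => -minPair (Δ i.succ) u)

def eStar (j : Fin (k+1)) : Vdk d k := (0, basisOrZero j)

def defect (p : Vdk d k) : Fin k → ℝ := fun i => p.2 i + minPair (Δ i.succ) p.1

def nablaZero : Set (Vdk d k) :=
  convexHull ℝ (dualLift Δ '' polarDual (∑ i, Δ i) ∪ ⋃ i : Fin k, {eStar i.succ})

/-- A convex set whose lattice points are those of `∇̂₀` for `c = 0` and those of
`∇̂₀ ⊎ ⋯ ⊎ ∇̂_k` for `c = 1`. -/
def envelope (c : ℝ) : Set (Vdk d k) :=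
  {p | p.1 ∈ polarDual (∑ i, Δ i) ∧ ∀ S : Finset (Fin k),
    ∑ i ∈ S, defect Δ p i - minPair (∑ i, Δ i) p.1 ≤ 1 ∧ ∑ i ∈ S, -defect Δ p i ≤ c}

variable {Δ}

@[simp] lemma dualLift_fst (u : Fin d → ℝ) : (dualLift Δ u).1 = u := rfl

@[simp] lemma eStar_zero : (eStar 0 : Vdk d k) = 0 := rfl

@[simp] lemma eStar_fst (j : Fin (k+1)) : (eStar j : Vdk d k).1 = 0 := rfl

lemma dualLift_add_defect (p : Vdk d k) : dualLift Δ p.1 + ((0 : Fin d → ℝ), defect Δ p) = p :=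
  Prod.ext (add_zero _) (funext fun i => by simp [dualLift, defect])

lemma defect_dualLift (u : Fin d → ℝ) : defect Δ (dualLift Δ u) = 0 :=
  funext fun i => by simp [dualLift, defect]

lemma defect_sub_eStar (p : Vdk d k) (j : Fin (k+1)) :
    defect Δ (p - eStar j) = defect Δ p - basisOrZero j :=
  funext fun i => by simp [defect, eStar]; ring

lemma dualLift_zero (hne : ∀ i, (Δ i).Nonempty) : dualLift Δ 0 = 0 :=
  Prod.ext rfl (funext fun i => by simp [dualLift, minPair_zero (hne i.succ)])

lemma defect_eStar (hne : ∀ i, (Δ i).Nonempty) (j : Fin (k+1)) :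
    defect Δ (eStar j : Vdk d k) = basisOrZero j :=
  funext fun i => by simp [defect, eStar, minPair_zero (hne i.succ)]

lemma isLatticePtV_dualLift (hlat : ∀ i, IsLatticePolytope (Δ i)) (hne : ∀ i, (Δ i).Nonempty)
    {u : Fin d → ℝ} (hu : IsLatticePt u) : IsLatticePtV (dualLift Δ u) :=
  ⟨hu, isLatticePt_iff_forall_mem_range.2 fun i =>
    neg_mem (minPair_mem_range (hlat i.succ) (hne i.succ) hu)⟩

lemma isLatticePtV_eStar (j : Fin (k+1)) : IsLatticePtV (eStar j : Vdk d k) :=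
  ⟨fun _ => ⟨0, by simp [eStar]⟩, isLatticePt_basisOrZero j⟩

lemma isLatticePt_defect (hlat : ∀ i, IsLatticePolytope (Δ i)) (hne : ∀ i, (Δ i).Nonempty)
    {p : Vdk d k} (hp : IsLatticePtV p) : IsLatticePt (defect Δ p) :=
  isLatticePt_iff_forall_mem_range.2 fun i => add_mem
    (isLatticePt_iff_forall_mem_range.1 hp.2 i) (minPair_mem_range (hlat i.succ) (hne i.succ) hp.1)

lemma convexOn_neg_minPair_fst {P : Set (Fin d → ℝ)} (hP : IsLatticePolytope P)
    (hne : P.Nonempty) : ConvexOn ℝ univ fun p : Vdk d k => -minPair P p.1 :=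
  (convexOn_neg_minPair hP hne).comp_linearMap (LinearMap.fst ℝ _ _)

lemma convexOn_snd_apply (i : Fin k) : ConvexOn ℝ univ fun p : Vdk d k => p.2 i :=
  (LinearMap.proj i ∘ₗ LinearMap.snd ℝ (Fin d → ℝ) (Fin k → ℝ)).convexOn convex_univ

lemma convexOn_neg_snd_apply (i : Fin k) : ConvexOn ℝ univ fun p : Vdk d k => -p.2 i :=
  (-(LinearMap.proj i ∘ₗ LinearMap.snd ℝ (Fin d → ℝ) (Fin k → ℝ))).convexOn convex_univ

/-- Convex because it equals `Σ_{i∈S} yᵢ - min⟨Δ₀,x⟩ - Σ_{i∉S} min⟨Δᵢ₊₁,x⟩`. -/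
lemma convexOn_sum_defect_sub_minPair (hlat : ∀ i, IsLatticePolytope (Δ i))
    (hne : ∀ i, (Δ i).Nonempty) (S : Finset (Fin k)) :
    ConvexOn ℝ univ fun p : Vdk d k => ∑ i ∈ S, defect Δ p i - minPair (∑ i, Δ i) p.1 := by
  have key : ∀ p : Vdk d k, ∑ i ∈ S, defect Δ p i - minPair (∑ i, Δ i) p.1 =
      (∑ i ∈ S, p.2 i + -minPair (Δ 0) p.1) + ∑ i ∈ Sᶜ, -minPair (Δ i.succ) p.1 := by
    intro p
    rw [minPair_sum hlat hne, Fin.sum_univ_succ, ← Finset.sum_add_sum_compl S]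
    simp only [defect, Finset.sum_add_distrib, Finset.sum_neg_distrib]
    ring
  simp only [key]
  exact ((convexOn_finsetSum convex_univ S fun i _ => convexOn_snd_apply i).add
    (convexOn_neg_minPair_fst (hlat 0) (hne 0))).add
    (convexOn_finsetSum convex_univ Sᶜ fun i _ => convexOn_neg_minPair_fst (hlat _) (hne _))

lemma convexOn_sum_neg_defect (hlat : ∀ i, IsLatticePolytope (Δ i))
    (hne : ∀ i, (Δ i).Nonempty) (S : Finset (Fin k)) :
    ConvexOn ℝ univ fun p : Vdk d k => ∑ i ∈ S, -defect Δ p i := by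
  simp only [defect, neg_add]
  exact convexOn_finsetSum convex_univ S fun i _ =>
    (convexOn_neg_snd_apply i).add (convexOn_neg_minPair_fst (hlat _) (hne _))

lemma convex_envelope (hlat : ∀ i, IsLatticePolytope (Δ i)) (hne : ∀ i, (Δ i).Nonempty)
    (c : ℝ) : Convex ℝ (envelope Δ c) := by
  intro p hp q hq a b ha hb hab
  refine ⟨(convex_polarDual _).linear_preimage (LinearMap.fst ℝ _ _) hp.1 hq.1 ha hb hab,
    fun S => ⟨?_, ?_⟩⟩
  · exact ((convexOn_sum_defect_sub_minPair hlat hne S).convex_le 1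
      ⟨trivial, (hp.2 S).1⟩ ⟨trivial, (hq.2 S).1⟩ ha hb hab).2
  · exact ((convexOn_sum_neg_defect hlat hne S).convex_le c
      ⟨trivial, (hp.2 S).2⟩ ⟨trivial, (hq.2 S).2⟩ ha hb hab).2

end Envelope

section LatticePoints

variable {d k : ℕ} {Δ : Fin (k+1) → Set (Fin d → ℝ)}

lemma eStar_injective : Function.Injective (eStar : Fin (k+1) → Vdk d k) :=
  fun _ _ h => basisOrZero_injective (congrArg Prod.snd h)

lemma defect_dualLift_sub_eStar (u : Fin d → ℝ) (j : Fin (k+1)) :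
    defect Δ (dualLift Δ u - eStar j) = -basisOrZero j := by
  rw [defect_sub_eStar, defect_dualLift, zero_sub]

lemma defect_eStar_sub_eStar (hne : ∀ i, (Δ i).Nonempty) (a j : Fin (k+1)) :
    defect Δ (eStar a - eStar j : Vdk d k) = basisOrZero a - basisOrZero j := by
  rw [defect_sub_eStar, defect_eStar hne]

lemma dualLift_mem_nablaZero {u : Fin d → ℝ} (hu : u ∈ polarDual (∑ i, Δ i)) :
    dualLift Δ u ∈ nablaZero Δ :=
  subset_convexHull ℝ _ (Or.inl (mem_image_of_mem _ hu))

lemma eStar_succ_mem_nablaZero (i : Fin k) : eStar i.succ ∈ nablaZero Δ :=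
  subset_convexHull ℝ _ (Or.inr (mem_iUnion.2 ⟨i, rfl⟩))

lemma dualLift_mem_envelope (hne : ∀ i, (Δ i).Nonempty) {u : Fin d → ℝ}
    (hu : u ∈ polarDual (∑ i, Δ i)) : dualLift Δ u ∈ envelope Δ 0 :=
  ⟨hu, fun S => by
    simp only [defect_dualLift, dualLift_fst, Pi.zero_apply, Finset.sum_const_zero, neg_zero,
      zero_sub, le_refl, and_true]
    linarith [neg_one_le_minPair (nonempty_fintypeSum hne) hu]⟩

lemma eStar_mem_envelope (hne : ∀ i, (Δ i).Nonempty) (j : Fin (k+1)) :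
    eStar j ∈ envelope Δ 0 := by
  refine ⟨zero_mem_polarDual _, fun S => ⟨?_, ?_⟩⟩
  · simpa [defect_eStar hne, minPair_zero (nonempty_fintypeSum hne)]
      using sum_basisOrZero_le_one S j
  · simpa [defect_eStar hne] using Finset.sum_nonneg fun i _ => basisOrZero_nonneg j i

lemma sub_eStar_mem_envelope {c : ℝ} {p : Vdk d k} (hp : p ∈ envelope Δ c) (j : Fin (k+1)) :
    p - eStar j ∈ envelope Δ (c + 1) := by
  refine ⟨by simpa using hp.1, fun S => ?_⟩
  have h0 : 0 ≤ ∑ i ∈ S, basisOrZero j i := Finset.sum_nonneg fun i _ => basisOrZero_nonneg j i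
  have h1 := sum_basisOrZero_le_one S j
  have := hp.2 S
  simp only [defect_sub_eStar, Pi.sub_apply, Finset.sum_sub_distrib, neg_sub,
    Prod.fst_sub, eStar_fst, sub_zero, Finset.sum_neg_distrib] at this ⊢
  constructor <;> linarith

lemma nablaZero_subset_envelope (hlat : ∀ i, IsLatticePolytope (Δ i))
    (hne : ∀ i, (Δ i).Nonempty) : nablaZero Δ ⊆ envelope Δ 0 :=
  convexHull_min (union_subset (image_subset_iff.2 fun _ hu => dualLift_mem_envelope hne hu)
    (iUnion_subset fun _ => singleton_subset_iff.2 (eStar_mem_envelope hne _)))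
    (convex_envelope hlat hne 0)

lemma convexHull_translates_subset_envelope (hlat : ∀ i, IsLatticePolytope (Δ i))
    (hne : ∀ i, (Δ i).Nonempty) :
    convexHull ℝ (⋃ j, (· - eStar j) '' nablaZero Δ) ⊆ envelope Δ 1 :=
  convexHull_min (iUnion_subset fun j => image_subset_iff.2 fun _ hp => by
      simpa using sub_eStar_mem_envelope (nablaZero_subset_envelope hlat hne hp) j)
    (convex_envelope hlat hne 1)

/-- Reflexivity forces `min⟨Δ,x⟩ ∈ {0,-1}`: over `x ≠ 0` no defect may be positive, over `x = 0`
at most one. -/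
lemma exists_posPart_defect_eq (hlat : ∀ i, IsLatticePolytope (Δ i))
    (hne : ∀ i, (Δ i).Nonempty) (hD : IsLatticePolytope (∑ i, Δ i))
    (h0 : (0 : Fin d → ℝ) ∈ interior (∑ i, Δ i)) {c : ℝ} {p : Vdk d k}
    (hp : p ∈ envelope Δ c) (hl : IsLatticePtV p) :
    ∃ a, (defect Δ p)⁺ = basisOrZero a ∧ (a = 0 ∨ p.1 = 0) := by
  rcases eq_zero_or_minPair_eq_neg_one hD h0 hp.1 hl.1 with hx | hm
  · obtain ⟨a, ha⟩ := exists_posPart_eq_basisOrZero (isLatticePt_defect hlat hne hl) fun S => by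
      simpa [hx, minPair_zero (nonempty_fintypeSum hne)] using (hp.2 S).1
    exact ⟨a, ha, Or.inr hx⟩
  · refine ⟨0, posPart_eq_zero.2 fun i => ?_, Or.inl rfl⟩
    simpa [hm] using (hp.2 {i}).1

lemma negPart_defect_eq_zero {p : Vdk d k} (hp : p ∈ envelope Δ 0) : (defect Δ p)⁻ = 0 :=
  negPart_eq_zero.2 fun i => by simpa using (hp.2 {i}).2

lemma exists_negPart_defect_eq (hlat : ∀ i, IsLatticePolytope (Δ i))
    (hne : ∀ i, (Δ i).Nonempty) {p : Vdk d k} (hp : p ∈ envelope Δ 1) (hl : IsLatticePtV p) :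
    ∃ j, (defect Δ p)⁻ = basisOrZero j := by
  rw [← posPart_neg]
  exact exists_posPart_eq_basisOrZero (isLatticePt_defect hlat hne hl).neg fun S => by
    simpa using (hp.2 S).2

lemma eq_dualLift_add_eStar_sub_eStar {p : Vdk d k} {a j : Fin (k+1)}
    (ha : (defect Δ p)⁺ = basisOrZero a) (hj : (defect Δ p)⁻ = basisOrZero j) :
    p = dualLift Δ p.1 + eStar a - eStar j := by
  conv_lhs => rw [← dualLift_add_defect p, ← posPart_sub_negPart (defect Δ p), ha, hj]
  ext <;> simp [eStar, add_sub_assoc]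

end LatticePoints

section Counting

variable {d k : ℕ} {Δ : Fin (k+1) → Set (Fin d → ℝ)}

theorem setOf_isLatticePtV_nablaZero (hlat : ∀ i, IsLatticePolytope (Δ i))
    (hne : ∀ i, (Δ i).Nonempty) (hD : IsLatticePolytope (∑ i, Δ i))
    (h0 : (0 : Fin d → ℝ) ∈ interior (∑ i, Δ i)) :
    {p ∈ nablaZero Δ | IsLatticePtV p} =
      dualLift Δ '' {n ∈ polarDual (∑ i, Δ i) | IsLatticePt n} ∪
        ⋃ i : Fin k, {eStar i.succ} := by
  ext p
  constructor
  · rintro ⟨hp, hl⟩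
    have hp' := nablaZero_subset_envelope hlat hne hp
    obtain ⟨a, ha, hap⟩ := exists_posPart_defect_eq hlat hne hD h0 hp' hl
    have hp_eq := eq_dualLift_add_eStar_sub_eStar ha
      ((negPart_defect_eq_zero hp').trans basisOrZero_zero.symm)
    cases a using Fin.cases with
    | zero => exact Or.inl ⟨p.1, ⟨hp'.1, hl.1⟩, by simpa using hp_eq.symm⟩
    | succ i =>
      refine Or.inr (mem_iUnion.2 ⟨i, ?_⟩)
      rw [hp_eq, hap.resolve_left (Fin.succ_ne_zero i), dualLift_zero hne]
      simp [eStar]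
  · rintro (⟨n, ⟨hn, hnl⟩, rfl⟩ | hp)
    · exact ⟨dualLift_mem_nablaZero hn, isLatticePtV_dualLift hlat hne hnl⟩
    · obtain ⟨i, rfl⟩ := mem_iUnion.1 hp
      exact ⟨eStar_succ_mem_nablaZero i, isLatticePtV_eStar _⟩

theorem ncard_dualLift_image_union {L : Set (Fin d → ℝ)} (hne : ∀ i, (Δ i).Nonempty)
    (hL : L.Finite) : (dualLift Δ '' L ∪ ⋃ i : Fin k, {eStar i.succ}).ncard = L.ncard + k := by
  have hdisj : Disjoint (dualLift Δ '' L) (⋃ i : Fin k, {eStar i.succ}) := by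
    refine disjoint_left.2 ?_
    rintro _ ⟨u, -, rfl⟩ hu
    obtain ⟨i, hi⟩ := mem_iUnion.1 hu
    have h := congrArg (defect Δ) (mem_singleton_iff.1 hi)
    rw [defect_dualLift, defect_eStar hne, ← basisOrZero_zero] at h
    exact Fin.succ_ne_zero i (basisOrZero_injective h).symm
  rw [iUnion_singleton_eq_range] at hdisj ⊢
  rw [ncard_union_eq hdisj (hL.image _) (finite_range _),
    ncard_image_of_injective _ fun _ _ h => congrArg Prod.fst h,
    ncard_range_of_injective fun _ _ h => Fin.succ_injective _ (eStar_injective h), Nat.card_fin]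

theorem setOf_isLatticePtV_convexHull_translates (hlat : ∀ i, IsLatticePolytope (Δ i))
    (hne : ∀ i, (Δ i).Nonempty) (hD : IsLatticePolytope (∑ i, Δ i))
    (h0 : (0 : Fin d → ℝ) ∈ interior (∑ i, Δ i)) :
    {p ∈ convexHull ℝ (⋃ j, (· - eStar j) '' nablaZero Δ) | IsLatticePtV p} =
      (fun q : Fin (k+1) × (Fin d → ℝ) => dualLift Δ q.2 - eStar q.1) ''
          (univ ×ˢ {n ∈ polarDual (∑ i, Δ i) | IsLatticePt n}) ∪
        (fun q : Fin (k+1) × Fin (k+1) => eStar q.1 - eStar q.2) ''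
          {q | q.1 ≠ 0 ∧ q.2 ≠ q.1} := by
  ext p
  constructor
  · rintro ⟨hp, hl⟩
    have hp' := convexHull_translates_subset_envelope hlat hne hp
    obtain ⟨a, ha, hap⟩ := exists_posPart_defect_eq hlat hne hD h0 hp' hl
    obtain ⟨j, hj⟩ := exists_negPart_defect_eq hlat hne hp' hl
    have hp_eq := eq_dualLift_add_eStar_sub_eStar ha hj
    have h0L : (0 : Fin d → ℝ) ∈ {n ∈ polarDual (∑ i, Δ i) | IsLatticePt n} :=
      ⟨zero_mem_polarDual _, fun _ => ⟨0, by simp⟩⟩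
    by_cases ha0 : a = 0
    · exact Or.inl ⟨(j, p.1), ⟨trivial, hp'.1, hl.1⟩, by simpa [ha0] using hp_eq.symm⟩
    rw [hap.resolve_left ha0, dualLift_zero hne, zero_add] at hp_eq
    by_cases hja : j = a
    · exact Or.inl ⟨(0, 0), ⟨trivial, h0L⟩, by simp [hp_eq, hja, dualLift_zero hne]⟩
    · exact Or.inr ⟨(a, j), ⟨ha0, hja⟩, hp_eq.symm⟩
  · rintro (⟨⟨j, n⟩, ⟨-, hn, hnl⟩, rfl⟩ | ⟨⟨a, j⟩, ⟨ha0, -⟩, rfl⟩)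
    · exact ⟨subset_convexHull ℝ _ (mem_iUnion.2 ⟨j, _, dualLift_mem_nablaZero hn, rfl⟩),
        (isLatticePtV_dualLift hlat hne hnl).sub (isLatticePtV_eStar j)⟩
    · obtain ⟨i, rfl⟩ := Fin.exists_succ_eq.2 ha0
      exact ⟨subset_convexHull ℝ _ (mem_iUnion.2 ⟨j, _, eStar_succ_mem_nablaZero i, rfl⟩),
        (isLatticePtV_eStar _).sub (isLatticePtV_eStar j)⟩

lemma ncard_setOf_ne_zero_and_ne (k : ℕ) :
    {q : Fin (k+1) × Fin (k+1) | q.1 ≠ 0 ∧ q.2 ≠ q.1}.ncard = k ^ 2 := by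
  classical
  rw [ncard_eq_toFinset_card', toFinset_ofPred, Finset.card_filter, Fintype.sum_prod_type]
  simp [Fin.sum_univ_succ, Finset.sum_boole, Finset.filter_ne', sq]

theorem ncard_translates {L : Set (Fin d → ℝ)} (hne : ∀ i, (Δ i).Nonempty) (hL : L.Finite) :
    ((fun q : Fin (k+1) × (Fin d → ℝ) => dualLift Δ q.2 - eStar q.1) '' (univ ×ˢ L) ∪
        (fun q : Fin (k+1) × Fin (k+1) => eStar q.1 - eStar q.2) ''
          {q | q.1 ≠ 0 ∧ q.2 ≠ q.1}).ncard = (k + 1) * L.ncard + k ^ 2 := by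
  have hinj : Function.Injective fun q : Fin (k+1) × (Fin d → ℝ) => dualLift Δ q.2 - eStar q.1 := by
    rintro ⟨j, u⟩ ⟨j', u'⟩ h
    obtain rfl : u = u' := by simpa using congrArg Prod.fst h
    exact Prod.ext (eStar_injective (sub_right_injective h)) rfl
  have hinjOn : InjOn (fun q : Fin (k+1) × Fin (k+1) => (eStar q.1 - eStar q.2 : Vdk d k))
      {q | q.1 ≠ 0 ∧ q.2 ≠ q.1} := by
    rintro ⟨a, j⟩ ⟨-, hja⟩ ⟨a', j'⟩ ⟨-, hja'⟩ h
    have hpos := congrArg (fun p => (defect Δ p)⁺) h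
    have hneg := congrArg (fun p => (defect Δ p)⁻) h
    simp only [defect_eStar_sub_eStar hne, ← posPart_neg, neg_sub,
      posPart_basisOrZero_sub hja, posPart_basisOrZero_sub hja',
      posPart_basisOrZero_sub (Ne.symm hja), posPart_basisOrZero_sub (Ne.symm hja')] at hpos hneg
    exact Prod.ext (basisOrZero_injective hpos) (basisOrZero_injective hneg)
  have hdisj : Disjoint
      ((fun q : Fin (k+1) × (Fin d → ℝ) => dualLift Δ q.2 - eStar q.1) '' (univ ×ˢ L))
      ((fun q : Fin (k+1) × Fin (k+1) => eStar q.1 - eStar q.2) ''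
        {q | q.1 ≠ 0 ∧ q.2 ≠ q.1}) := by
    refine disjoint_left.2 ?_
    rintro _ ⟨⟨j, u⟩, -, rfl⟩ ⟨⟨a, j'⟩, ⟨ha0, hja⟩, h⟩
    dsimp only at h ha0 hja
    have hpos := congrArg (fun p => (defect Δ p)⁺) h
    simp only [defect_eStar_sub_eStar hne, defect_dualLift_sub_eStar,
      posPart_basisOrZero_sub (Ne.symm hja), posPart_eq_zero.2 (neg_nonpos.2 (basisOrZero_nonneg j))] at hpos
    exact ha0 (basisOrZero_injective (hpos.trans basisOrZero_zero.symm))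
  rw [ncard_union_eq hdisj ((finite_univ.prod hL).image _) (toFinite _),
    ncard_image_of_injective _ hinj, hinjOn.ncard_image, ncard_prod, ncard_univ,
    Nat.card_fin, ncard_setOf_ne_zero_and_ne]

end Counting

/-- the lattice points of `∇̂₀` are
`{n − Σᵢ₌₁ᵏ min⟨Δᵢ,n⟩eᵢ* : n ∈ Δ* ∩ ℤ^d} ∪ {e₁*, …, e_k*}`, so `l(∇̂₀) = l(Δ*) + k`;
moreover `l(∇̂₀ ⊎ ⋯ ⊎ ∇̂_k) = (k+1)l(Δ*) + k²`. -/
theorem lattice_points_hatNabla {d k : ℕ}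
    (Δ : Fin (k+1) → Set (Fin d → ℝ))
    (hlat : ∀ i, IsLatticePolytope (Δ i))
    (hrefl : IsReflexive (∑ i, Δ i))
    -- ∇̂₀ = Conv({u − Σᵢ₌₁ᵏ min⟨Δᵢ,u⟩eᵢ* : u ∈ Δ*} ∪ {e₁*, …, e_k*})
    (Q : Set (Vdk d k))
    (hQ : Q = convexHull ℝ
        ((fun u => ((u, fun i : Fin k => -(minPair (Δ i.succ) u)) : Vdk d k)) ''
            polarDual (∑ i, Δ i) ∪
          ⋃ i : Fin k, {(((0 : Fin d → ℝ), Pi.single i 1) : Vdk d k)}))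
    -- ∇̂ᵢ = ∇̂₀ − eᵢ* for i = 1, …, k
    (Nhat : Fin (k+1) → Set (Vdk d k))
    (hNhat : Nhat = Fin.cases Q
        (fun i => (fun y => y - (((0 : Fin d → ℝ), Pi.single i 1) : Vdk d k)) '' Q)) :
    -- L(∇̂₀) = {n − Σᵢ min⟨Δᵢ,n⟩eᵢ* : n ∈ Δ* ∩ ℤ^d} ∪ {e₁*, …, e_k*}
    ({x ∈ Q | IsLatticePtV x} =
      (fun u => ((u, fun i : Fin k => -(minPair (Δ i.succ) u)) : Vdk d k)) ''
          {n ∈ polarDual (∑ i, Δ i) | IsLatticePt n} ∪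
        ⋃ i : Fin k, {(((0 : Fin d → ℝ), Pi.single i 1) : Vdk d k)}) ∧
    -- l(∇̂₀) = l(Δ*) + k
    {x ∈ Q | IsLatticePtV x}.ncard =
      {n ∈ polarDual (∑ i, Δ i) | IsLatticePt n}.ncard + k ∧
    -- l(∇̂₀ ⊎ ⋯ ⊎ ∇̂_k) = (k+1)·l(Δ*) + k²
    {x ∈ convexHull ℝ (⋃ i, Nhat i) | IsLatticePtV x}.ncard =
      (k + 1) * {n ∈ polarDual (∑ i, Δ i) | IsLatticePt n}.ncard + k ^ 2 := by
  obtain ⟨hD, h0, hDual⟩ := hrefl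
  have hne := nonempty_of_fintypeSum_nonempty ⟨0, interior_subset h0⟩
  have hQ0 : Q = nablaZero Δ := hQ
  have hN : ⋃ i, Nhat i = ⋃ j, (· - eStar j) '' nablaZero Δ := by
    rw [← hQ0, hNhat]
    refine iUnion_congr fun j => ?_
    cases j using Fin.cases <;> simp [eStar, Prod.mk_zero_zero]
  have hL := hDual.isBounded.finite_setOf_isLatticePt
  have hQlat := setOf_isLatticePtV_nablaZero hlat hne hD h0
  subst hQ0
  refine ⟨hQlat, ?_, ?_⟩
  · exact hQlat ▸ ncard_dualLift_image_union hne hL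
  · rw [hN, setOf_isLatticePtV_convexHull_translates hlat hne hD h0, ncard_translates hne hL]
end
end

section
/- Let Δ = Δ_0 + Δ_1 + ⋯ + Δ_k be a Minkowski sum decomposition of a reflexive polytope Δ ⊂ ℝ^d into lattice polytopes. Define Δ̂_0 = Conv(Δ_0, Δ_1 + e_1, …, Δ_k + e_k), Δ̂_i = Δ̂_0 − e_i for i = 1,…,k, and Δ̃_i = Conv((Δ_i + e_i) ∪ {0}) for i = 0,…,k, all in ℝ^d ⊕ ℝ^k, where e_0 = −(e_1+⋯+e_k). Then the linear map φ : ℝ^d ⊕ ℝ^k → ℝ^d ⊕ ℝ^k defined by φ(m + Σ_{i=1}^k α_i e_i) = (k+1)m + Σ_{i=1}^k α_i ((k+1)e_i + e_0) for m ∈ ℝ^d (which maps ℤ^d ⊕ ℤ^k into itself) maps Δ̃_0 ⊎ Δ̃_1 ⊎ ⋯ ⊎ Δ̃_k bijectively onto Δ̂_0 + Δ̂_1 + ⋯ + Δ̂_k. -/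
open scoped Pointwise
open Set

noncomputable section

/-- `e₀ = −(e₁ + ⋯ + e_k)`, `eᵢ` the standard basis of the second factor `ℝ^k`. -/
def evec {k : ℕ} : Fin (k+1) → Fin k → ℝ :=
  Fin.cases (fun _ => -1) (fun i => Pi.single i 1)

/-- The linear map `φ(m + Σᵢ₌₁ᵏ αᵢeᵢ) = (k+1)m + Σᵢ₌₁ᵏ αᵢ((k+1)eᵢ + e₀)`. -/
def phi {d k : ℕ} : Vdk d k → Vdk d k :=
  fun p => (((k : ℝ) + 1) • p.1, fun j => ((k : ℝ) + 1) * p.2 j - ∑ i, p.2 i)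

/-!
Both sides are Cayley-type sets. A point of `Δ̃₀ ⊎ ⋯ ⊎ Δ̃_k` is `(x, ∑ uᵢ eᵢ)` with `u ≥ 0`,
`∑ uᵢ ≤ 1` and `x ∈ ∑ uᵢ Δᵢ`, while `Δ̂₀` consists of the points `(x, v₁, …, v_k)` with `v` in the
standard simplex and `x ∈ ∑ vᵢ Δᵢ`; by convexity `Δ̂₀ + ⋯ + Δ̂_k = (k+1) Δ̂₀ - (e₁ + ⋯ + e_k)`.
Now `φ` sends the point given by `u` to `((k+1) x, ((k+1) u_j - ∑ uᵢ)_j)`, and because `0 ∈ ∑ Δᵢ`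
the slack `1 - ∑ uᵢ` can be spread evenly over the weights: with `c = (1 - ∑ uᵢ)/(k+1)` we have
`∑ uᵢ Δᵢ ⊆ ∑ (uᵢ + c) Δᵢ`, so the image is the point of `(k+1) Δ̂₀ - (e₁ + ⋯ + e_k)` given by
`v = u + c`. Conversely every `v` in the simplex is such a `u`. Finally `φ` is injective.
-/

section Cayley

variable {ι E F : Type*} [Fintype ι] [AddCommGroup E] [Module ℝ E] [AddCommGroup F] [Module ℝ F]

lemma Convex.nsmul_eq_smul {s : Set E}
    (hs : Convex ℝ s) (hne : s.Nonempty) (n : ℕ) : n • s = (n : ℝ) • s := by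
  induction n with
  | zero => simp [hne]
  | succ n ih => rw [succ_nsmul, ih, Nat.cast_succ, hs.add_smul n.cast_nonneg zero_le_one, one_smul]

lemma mem_sum_smul_set {u : ι → ℝ} {A : ι → Set E} {x : E} :
    x ∈ ∑ i, u i • A i ↔ ∃ a : ι → E, (∀ i, a i ∈ A i) ∧ ∑ i, u i • a i = x := by
  simp only [Set.mem_fintype_sum, Set.mem_smul_set]
  constructor
  · rintro ⟨g, hg, rfl⟩
    choose a ha hga using hg
    exact ⟨a, ha, by simp [hga]⟩
  · rintro ⟨a, ha, rfl⟩
    exact ⟨_, fun i => ⟨a i, ha i, rfl⟩, rfl⟩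

lemma sum_single_smul_set [DecidableEq ι] {A : ι → Set E} (hA : ∀ i, (A i).Nonempty) (i : ι) :
    ∑ j, (Pi.single i (1 : ℝ) : ι → ℝ) j • A j = A i := by
  rw [Finset.sum_eq_single i (fun j _ hj => by simp [hj, hA j]) (by simp)]
  simp

lemma Convex.sum_smul_mem_of_zero_mem {K : Set E} (hK : Convex ℝ K) (h0 : 0 ∈ K) {w : ι → ℝ}
    {z : ι → E} (hw : ∀ i, 0 ≤ w i) (hw₁ : ∑ i, w i ≤ 1) (hz : ∀ i, z i ∈ K) :
    ∑ i, w i • z i ∈ K := by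
  have := hK.sum_mem (t := Finset.univ) (w := fun o : Option ι => o.elim (1 - ∑ i, w i) w)
    (z := fun o => o.elim 0 z) (fun o _ => by cases o <;> simp [hw, hw₁])
    (by simp [Fintype.sum_option]) (fun o _ => by cases o <;> simp [h0, hz])
  simpa [Fintype.sum_option] using this

lemma sum_smul_set_subset_sum_add_smul_set {A : ι → Set E} (hA : ∀ i, Convex ℝ (A i))
    (h0 : (0 : E) ∈ ∑ i, A i) {u : ι → ℝ} (hu : ∀ i, 0 ≤ u i) {c : ℝ} (hc : 0 ≤ c) :
    ∑ i, u i • A i ⊆ ∑ i, (u i + c) • A i := by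
  intro x hx
  simp_rw [(hA _).add_smul (hu _) hc, Finset.sum_add_distrib]
  rw [← add_zero x, ← smul_zero c]
  have hc0 : c • (0 : E) ∈ ∑ i, c • A i := by
    rw [← Finset.smul_sum]
    exact Set.smul_mem_smul_set h0
  exact Set.add_mem_add hx hc0

lemma convex_nonneg_sum_le_one (ι : Type*) [Fintype ι] :
    Convex ℝ {u : ι → ℝ | (∀ i, 0 ≤ u i) ∧ ∑ i, u i ≤ 1} := by
  refine (convex_Ici (0 : ι → ℝ)).inter ?_
  exact convex_halfSpace_le (f := fun u : ι → ℝ => ∑ i, u i)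
    ⟨fun u v => Finset.sum_add_distrib, fun c u => by simp [Finset.mul_sum]⟩ 1

def cayleySet (A : ι → Set E) (f : ι → F) (C : Set (ι → ℝ)) : Set (E × F) :=
  {p | ∃ u ∈ C, p.1 ∈ ∑ i, u i • A i ∧ p.2 = ∑ i, u i • f i}

lemma convex_cayleySet {A : ι → Set E} (hA : ∀ i, Convex ℝ (A i)) (f : ι → F)
    {C : Set (ι → ℝ)} (hC : Convex ℝ C) (hC₀ : ∀ u ∈ C, ∀ i, 0 ≤ u i) :
    Convex ℝ (cayleySet A f C) := by
  rintro p ⟨u, hu, hp₁, hp₂⟩ q ⟨v, hv, hq₁, hq₂⟩ a b ha hb hab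
  refine ⟨a • u + b • v, hC hu hv ha hb hab, ?_, ?_⟩
  · have hsum : a • ∑ i, u i • A i + b • ∑ i, v i • A i = ∑ i, (a • u + b • v) i • A i := by
      simp only [Finset.smul_sum, smul_smul, ← Finset.sum_add_distrib, Pi.add_apply,
        Pi.smul_apply, smul_eq_mul]
      exact Finset.sum_congr rfl fun i _ => ((hA i).add_smul
        (mul_nonneg ha (hC₀ u hu i)) (mul_nonneg hb (hC₀ v hv i))).symm
    exact hsum ▸ Set.add_mem_add (Set.smul_mem_smul_set hp₁) (Set.smul_mem_smul_set hq₁)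
  · simp [hp₂, hq₂, Finset.smul_sum, add_smul, smul_smul, Finset.sum_add_distrib]

lemma mk_mem_cayleySet [DecidableEq ι] {A : ι → Set E} (hA : ∀ i, (A i).Nonempty) (f : ι → F)
    {C : Set (ι → ℝ)} {i : ι} (hi : Pi.single i 1 ∈ C) {x : E} (hx : x ∈ A i) :
    (x, f i) ∈ cayleySet A f C :=
  ⟨Pi.single i 1, hi, by rwa [sum_single_smul_set hA], by simp [Pi.single_apply]⟩

lemma exists_eq_sum_smul_of_mem_cayleySet {A : ι → Set E} {f : ι → F} {C : Set (ι → ℝ)}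
    {p : E × F} (hp : p ∈ cayleySet A f C) :
    ∃ u ∈ C, ∃ a : ι → E, (∀ i, a i ∈ A i) ∧ p = ∑ i, u i • (a i, f i) := by
  obtain ⟨u, hu, hp₁, hp₂⟩ := hp
  obtain ⟨a, ha, hpa⟩ := mem_sum_smul_set.1 hp₁
  exact ⟨u, hu, a, ha, Prod.ext (by simp [Prod.fst_sum, hpa]) (by simp [Prod.snd_sum, hp₂])⟩

lemma convexHull_iUnion_eq_cayleySet {A : ι → Set E} (hA : ∀ i, Convex ℝ (A i))
    (hne : ∀ i, (A i).Nonempty) (f : ι → F) :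
    convexHull ℝ (⋃ i, (fun x => (x, f i)) '' A i) = cayleySet A f (stdSimplex ℝ ι) := by
  classical
  have hconv := convex_cayleySet hA f (convex_stdSimplex ℝ ι) fun u hu => hu.1
  refine (convexHull_min ?_ hconv).antisymm ?_
  · refine Set.iUnion_subset fun i => ?_
    rintro _ ⟨x, hx, rfl⟩
    exact mk_mem_cayleySet hne f (single_mem_stdSimplex ℝ i) hx
  · intro p hp
    obtain ⟨u, hu, a, ha, rfl⟩ := exists_eq_sum_smul_of_mem_cayleySet hp
    exact (convex_convexHull ℝ _).sum_mem (fun i _ => hu.1 i) hu.2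
      fun i _ => subset_convexHull ℝ _ (Set.mem_iUnion.2 ⟨i, a i, ha i, rfl⟩)

lemma convexHull_iUnion_convexHull_insert_zero_eq_cayleySet [Nonempty ι] {A : ι → Set E}
    (hA : ∀ i, Convex ℝ (A i)) (hne : ∀ i, (A i).Nonempty) (f : ι → F) :
    convexHull ℝ (⋃ i, convexHull ℝ ((fun x => (x, f i)) '' A i ∪ {0})) =
      cayleySet A f {u | (∀ i, 0 ≤ u i) ∧ ∑ i, u i ≤ 1} := by
  classical
  have hconv := convex_cayleySet hA f (convex_nonneg_sum_le_one ι) fun u hu => hu.1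
  refine (convexHull_min ?_ hconv).antisymm ?_
  · refine Set.iUnion_subset fun i => convexHull_min (Set.union_subset ?_ ?_) hconv
    · rintro _ ⟨x, hx, rfl⟩
      refine mk_mem_cayleySet hne f ?_ hx
      exact ⟨fun j => by simp [Pi.single_apply, apply_ite], by simp⟩
    · rintro _ rfl
      exact ⟨(0 : ι → ℝ), ⟨fun _ => le_rfl, by simp⟩, by simp [hne], by simp⟩
  · intro p hp
    obtain ⟨u, ⟨hu₀, hu₁⟩, a, ha, rfl⟩ := exists_eq_sum_smul_of_mem_cayleySet hp
    obtain ⟨i₀⟩ := ‹Nonempty ι›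
    refine (convex_convexHull ℝ _).sum_smul_mem_of_zero_mem ?_ hu₀ hu₁ fun i => ?_
    · exact subset_convexHull ℝ _ (Set.mem_iUnion.2 ⟨i₀, subset_convexHull ℝ _ (Or.inr rfl)⟩)
    · exact subset_convexHull ℝ _
        (Set.mem_iUnion.2 ⟨i, subset_convexHull ℝ _ (Or.inl ⟨a i, ha i, rfl⟩)⟩)

end Cayley

lemma IsLatticePolytope.convex {n : ℕ} {P : Set (Fin n → ℝ)} (hP : IsLatticePolytope P) :
    Convex ℝ P := by
  obtain ⟨S, -, -, rfl⟩ := hP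
  exact convex_convexHull ℝ S

lemma isLatticePtV_phi {d k : ℕ} {x : Vdk d k} (hx : IsLatticePtV x) : IsLatticePtV (phi x) := by
  obtain ⟨h₁, h₂⟩ := hx
  choose z₁ hz₁ using h₁
  choose z₂ hz₂ using h₂
  refine ⟨fun i => ⟨(k + 1) * z₁ i, ?_⟩, fun j => ⟨(k + 1) * z₂ j - ∑ i, z₂ i, ?_⟩⟩
  · simp [phi, hz₁]
  · simp [phi, hz₂]

lemma phi_injective {d k : ℕ} : Function.Injective (phi (d := d) (k := k)) := by
  rintro ⟨x, y⟩ ⟨x', y'⟩ h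
  simp only [phi, Prod.mk.injEq, funext_iff] at h
  obtain ⟨h₁, h₂⟩ := h
  have hk : ((k : ℝ) + 1) ≠ 0 := by positivity
  have hsum : ∑ i, y i = ∑ i, y' i := by
    have := Finset.sum_congr rfl fun j (_ : j ∈ Finset.univ) => h₂ j
    simp only [Finset.sum_sub_distrib, ← Finset.mul_sum, Finset.sum_const, Finset.card_univ,
      Fintype.card_fin, nsmul_eq_mul] at this
    linarith
  refine Prod.ext (funext fun i => mul_left_cancel₀ hk (h₁ i)) (funext fun j => ?_)
  exact mul_left_cancel₀ hk (by linarith [h₂ j])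

/-- The heights `0, e₁, …, e_k` of the pieces of `Δ̂₀`. -/
def evecHat {k : ℕ} : Fin (k+1) → Fin k → ℝ :=
  Fin.cases 0 (fun i => Pi.single i 1)

lemma sum_smul_evec {k : ℕ} (u : Fin (k+1) → ℝ) :
    ∑ i, u i • evec i = fun j => u j.succ - u 0 := by
  ext j
  simp [Fin.sum_univ_succ, evec, Pi.single_apply, sub_eq_neg_add]

lemma sum_smul_evecHat {k : ℕ} (u : Fin (k+1) → ℝ) :
    ∑ i, u i • evecHat i = fun j => u j.succ := by
  ext j
  simp [Fin.sum_univ_succ, evecHat, Pi.single_apply]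

lemma phi_mk_sub_head {d k : ℕ} (x : Fin d → ℝ) (u : Fin (k+1) → ℝ) :
    phi ((x, fun j => u j.succ - u 0) : Vdk d k) =
      (((k : ℝ) + 1) • x, fun j => ((k : ℝ) + 1) * u j.succ - ∑ i, u i) := by
  ext j
  · rfl
  · simp only [phi, Finset.sum_sub_distrib, Finset.sum_const, Finset.card_univ, Fintype.card_fin,
      nsmul_eq_mul, Fin.sum_univ_succ (f := u)]
    ring

lemma image_phi_cayleySet {d k : ℕ} {Δ : Fin (k+1) → Set (Fin d → ℝ)}
    (hΔ : ∀ i, Convex ℝ (Δ i)) (h0 : (0 : Fin d → ℝ) ∈ ∑ i, Δ i) :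
    phi '' cayleySet Δ evec {u | (∀ i, 0 ≤ u i) ∧ ∑ i, u i ≤ 1} =
      ((k : ℝ) + 1) • cayleySet Δ evecHat (stdSimplex ℝ (Fin (k+1))) - {(0, 1)} := by
  have hk : (0 : ℝ) < k + 1 := by positivity
  rw [Set.sub_singleton, ← Set.image_smul, Set.image_image]
  ext y
  constructor
  · rintro ⟨⟨x, _⟩, ⟨u, ⟨hu₀, hu₁⟩, hx, rfl⟩, rfl⟩
    set c := (1 - ∑ i, u i) / ((k : ℝ) + 1)
    have hc : 0 ≤ c := div_nonneg (by linarith) hk.le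
    have hsum : ∑ i, (u i + c) = 1 := by
      simp only [Finset.sum_add_distrib, Finset.sum_const, Finset.card_univ, Fintype.card_fin,
        nsmul_eq_mul, c]
      field_simp
      push_cast
      ring
    refine ⟨(x, ∑ i, (u i + c) • evecHat i),
      ⟨fun i => u i + c, ⟨fun i => add_nonneg (hu₀ i) hc, hsum⟩,
        sum_smul_set_subset_sum_add_smul_set hΔ h0 hu₀ hc hx, rfl⟩, ?_⟩
    rw [sum_smul_evec, phi_mk_sub_head, sum_smul_evecHat]
    ext j
    · simp
    · simp only [Prod.snd_sub, Prod.smul_snd, Pi.sub_apply, Pi.smul_apply, Pi.one_apply,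
        smul_eq_mul, c]
      field_simp
      ring
  · rintro ⟨⟨x, _⟩, ⟨v, ⟨hv₀, hv₁⟩, hx, rfl⟩, rfl⟩
    refine ⟨(x, ∑ i, v i • evec i), ⟨v, ⟨hv₀, hv₁.le⟩, hx, rfl⟩, ?_⟩
    rw [sum_smul_evec, phi_mk_sub_head, sum_smul_evecHat, hv₁]
    ext j <;> simp

lemma sum_translates_eq_smul_sub_singleton {d k : ℕ} {Q : Set (Vdk d k)} (hQ : Convex ℝ Q)
    (hne : Q.Nonempty) :
    ∑ i, (Fin.cases Q (fun i => (fun y => y - (((0 : Fin d → ℝ), Pi.single i 1) : Vdk d k)) '' Q) :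
      Fin (k+1) → Set (Vdk d k)) i = ((k : ℝ) + 1) • Q - {(0, 1)} := by
  have hhat : ∀ i, (Fin.cases Q (fun i => (fun y => y - (((0 : Fin d → ℝ), Pi.single i 1) :
      Vdk d k)) '' Q) : Fin (k+1) → Set (Vdk d k)) i = Q - {(0, evecHat i)} := by
    refine Fin.cases ?_ fun i => ?_
    · simp [evecHat, Prod.mk_zero_zero]
    · simp [evecHat, Set.sub_singleton]
  have hones : ∑ i, ((0, evecHat i) : Vdk d k) = (0, 1) := by
    ext
    · simp [Prod.fst_sum]
    · simpa [Prod.snd_sum] using congrFun (sum_smul_evecHat (k := k) 1) _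
  simp_rw [hhat, Finset.sum_sub_distrib, Set.finsetSum_singleton, hones, Finset.sum_const,
    Finset.card_univ, Fintype.card_fin, hQ.nsmul_eq_smul hne]
  push_cast
  rfl

lemma iUnion_image_evecHat {d k : ℕ} (Δ : Fin (k+1) → Set (Fin d → ℝ)) :
    ⋃ i, (fun x => ((x, evecHat i) : Vdk d k)) '' Δ i =
      (fun x => ((x, 0) : Vdk d k)) '' Δ 0 ∪
        ⋃ i : Fin k, (fun x => ((x, Pi.single i 1) : Vdk d k)) '' Δ i.succ := by
  rw [Set.iUnion_fin_add_one_eq_iUnion_succ]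
  rfl

/-- `φ` maps the lattice `ℤ^d ⊕ ℤ^k` into itself and maps
`Δ̃₀ ⊎ Δ̃₁ ⊎ ⋯ ⊎ Δ̃_k` bijectively onto `Δ̂₀ + Δ̂₁ + ⋯ + Δ̂_k`. -/
theorem phi_maps_tilde_to_hat {d k : ℕ}
    (Δ : Fin (k+1) → Set (Fin d → ℝ))
    (hlat : ∀ i, IsLatticePolytope (Δ i))
    (hrefl : IsReflexive (∑ i, Δ i))
    -- Δ̂₀ = Conv(Δ₀, Δ₁ + e₁, …, Δ_k + e_k)
    (Q : Set (Vdk d k))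
    (hQ : Q = convexHull ℝ ((fun x => ((x, 0) : Vdk d k)) '' Δ 0 ∪
        ⋃ i : Fin k, (fun x => ((x, Pi.single i 1) : Vdk d k)) '' Δ i.succ))
    -- Δ̂ᵢ = Δ̂₀ − eᵢ for i = 1, …, k
    (Δhat : Fin (k+1) → Set (Vdk d k))
    (hΔhat : Δhat = Fin.cases Q
        (fun i => (fun y => y - (((0 : Fin d → ℝ), Pi.single i 1) : Vdk d k)) '' Q))
    -- Δ̃ᵢ = Conv((Δᵢ + eᵢ) ∪ {0}) for i = 0, …, k
    (Δtilde : Fin (k+1) → Set (Vdk d k))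
    (hΔtilde : Δtilde = fun i =>
        convexHull ℝ ((fun x => ((x, evec i) : Vdk d k)) '' Δ i ∪ {0})) :
    -- φ maps ℤ^d ⊕ ℤ^k into itself
    (∀ x : Vdk d k, IsLatticePtV x → IsLatticePtV (phi x)) ∧
    -- φ maps Δ̃₀ ⊎ ⋯ ⊎ Δ̃_k bijectively onto Δ̂₀ + ⋯ + Δ̂_k
    Set.BijOn (phi (d := d) (k := k)) (convexHull ℝ (⋃ i, Δtilde i)) (∑ i, Δhat i) := by
  refine ⟨fun _ => isLatticePtV_phi, ?_⟩
  have h0 : (0 : Fin d → ℝ) ∈ ∑ i, Δ i := interior_subset hrefl.2.1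
  have hconv : ∀ i, Convex ℝ (Δ i) := fun i => (hlat i).convex
  have hne : ∀ i, (Δ i).Nonempty := fun i => by
    obtain ⟨g, hg, -⟩ := (Set.mem_fintype_sum _ _).1 h0
    exact ⟨g i, hg i⟩
  have hQ' : Q = cayleySet Δ evecHat (stdSimplex ℝ (Fin (k+1))) := by
    rw [hQ, ← iUnion_image_evecHat, convexHull_iUnion_eq_cayleySet hconv hne]
  have hQne : Q.Nonempty := hQ ▸ (Set.Nonempty.image _ (hne 0)).mono
    (Set.subset_union_left.trans (subset_convexHull ℝ _))
  rw [hΔtilde, hΔhat, sum_translates_eq_smul_sub_singleton (hQ ▸ convex_convexHull ℝ _) hQne,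
    hQ', convexHull_iUnion_convexHull_insert_zero_eq_cayleySet hconv hne,
    ← image_phi_cayleySet hconv h0]
  exact phi_injective.injOn.bijOn_image
end
end

section
/- Let Δ = Δ_0 + Δ_1 + ⋯ + Δ_k be a Minkowski sum decomposition of a reflexive polytope Δ ⊂ ℝ^d into lattice polytopes, and for each i = 0,…,k let (a_{i,m})_{m ∈ Δ_i ∩ ℤ^d} be complex numbers such that ∏_{i=0}^k (Σ_{m ∈ Δ_i ∩ ℤ^d} |a_{i,m}|) < 1. Set g(t) = 1 − ∏_{i=0}^k (Σ_{m ∈ Δ_i ∩ ℤ^d} a_{i,m} t^m) for t ∈ (ℂ*)^d. Then g does not vanish on the real torus {|t_1| = ⋯ = |t_d| = 1}, and the iterated contour integral (1/(2π√−1)^d) ∮_{|t_1|=1} ⋯ ∮_{|t_d|=1} (1/g(t)) dt_1/t_1 ⋯ dt_d/t_d equals Σ_{l ∈ L} ∏_{i=0}^k [ (Σ_{m ∈ Δ_i ∩ ℤ^d} l_{i,m})! · ∏_{m ∈ Δ_i ∩ ℤ^d} a_{i,m}^{l_{i,m}} / (l_{i,m})! ], the series converging absolutely, where L is the set of families l =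 (l_{i,m}) of nonnegative integers indexed by i ∈ {0,…,k} and m ∈ Δ_i ∩ ℤ^d such that Σ_{i=0}^k Σ_{m ∈ Δ_i ∩ ℤ^d} l_{i,m}·m = 0 in ℤ^d and Σ_{m ∈ Δ_i ∩ ℤ^d} l_{i,m} = Σ_{m ∈ Δ_0 ∩ ℤ^d} l_{0,m} for every i. -/
open scoped Pointwise
open Set

noncomputable section

open Complex MeasureTheory

/-- The lattice points of `P ⊆ ℝ^d`, viewed inside `ℤ^d`. -/
def LP {d : ℕ} (P : Set (Fin d → ℝ)) : Set (Fin d → ℤ) :=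
  {m | (fun j => (m j : ℝ)) ∈ P}

/-!
On the real torus `|tⱼ| = 1` every Laurent monomial has modulus one, so the Laurent polynomial
`P = ∏ᵢ Σₘ a_{i,m} tᵐ` satisfies `|P| ≤ ∏ᵢ Σₘ |a_{i,m}| < 1`. Hence `g = 1 - P` has no zeros
there and `1/g = Σₙ Pⁿ` uniformly, so the normalised torus integral of `1/g` is the sum of the
constant terms of the powers `Pⁿ`. By the multinomial theorem the constant term of `Pⁿ` is the
sum of the hypergeometric terms over the families `l` with all level sums equal to `n` and total
weight `Σ l_{i,m} m = 0`; summing over `n` regroups these into the series over `L`, and the same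
bound `(∏ᵢ Σₘ |a_{i,m}|)ⁿ` on the `n`-th group gives absolute convergence.
-/

section LatticePoints

variable {d : ℕ}

lemma LP_subset_Icc_of_subset_closedBall {P : Set (Fin d → ℝ)} {C : ℝ}
    (hP : P ⊆ Metric.closedBall 0 C) : LP P ⊆ Icc (fun _ => -⌈C⌉) (fun _ => ⌈C⌉) := by
  intro m hm
  have hmC : ∀ j, |(m j : ℝ)| ≤ C := fun j =>
    (norm_le_pi_norm (fun j => (m j : ℝ)) j).trans (mem_closedBall_zero_iff.1 (hP hm))
  refine ⟨fun j => ?_, fun j => ?_⟩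
  · have : -(⌈C⌉ : ℝ) ≤ m j := (neg_le_neg (Int.le_ceil C)).trans (neg_le_of_abs_le (hmC j))
    exact_mod_cast this
  · exact Int.cast_le.1 ((le_of_abs_le (hmC j)).trans (Int.le_ceil C))

lemma Bornology.IsBounded.finite_LP {P : Set (Fin d → ℝ)} (hP : Bornology.IsBounded P) :
    (LP P).Finite := by
  obtain ⟨C, hC⟩ := hP.subset_closedBall 0
  exact (finite_Icc _ _).subset (LP_subset_Icc_of_subset_closedBall hC)

lemma IsLatticePolytope.finite_LP {P : Set (Fin d → ℝ)} (hP : IsLatticePolytope P) :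
    (LP P).Finite := by
  obtain ⟨S, hS, -, rfl⟩ := hP
  exact (hS.isCompact_convexHull ℝ).isBounded.finite_LP

end LatticePoints

section LaurentMonomial

variable {d : ℕ}

def laurentMon (m : Fin d → ℤ) (t : Fin d → ℂ) : ℂ := ∏ j, t j ^ m j

lemma laurentMon_zero (t : Fin d → ℂ) : laurentMon 0 t = 1 := by
  simp [laurentMon]

lemma laurentMon_add {t : Fin d → ℂ} (ht : ∀ j, t j ≠ 0) (u v : Fin d → ℤ) :
    laurentMon (u + v) t = laurentMon u t * laurentMon v t := by
  simp only [laurentMon, Pi.add_apply, zpow_add₀ (ht _), Finset.prod_mul_distrib]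

lemma laurentMon_sum {ι : Type*} {t : Fin d → ℂ} (ht : ∀ j, t j ≠ 0) (s : Finset ι)
    (v : ι → Fin d → ℤ) : laurentMon (∑ x ∈ s, v x) t = ∏ x ∈ s, laurentMon (v x) t := by
  classical
  induction s using Finset.induction_on with
  | empty => simp [laurentMon_zero]
  | insert x s hx ih => rw [Finset.sum_insert hx, Finset.prod_insert hx, laurentMon_add ht, ih]

lemma laurentMon_nsmul (t : Fin d → ℂ) (m : Fin d → ℤ) (e : ℕ) :
    laurentMon (e • m) t = laurentMon m t ^ e := by
  simp only [laurentMon, ← Finset.prod_pow, Pi.smul_apply, nsmul_eq_mul, zpow_mul', zpow_natCast]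

lemma norm_laurentMon {t : Fin d → ℂ} (ht : ∀ j, ‖t j‖ = 1) (m : Fin d → ℤ) :
    ‖laurentMon m t‖ = 1 := by
  simp [laurentMon, norm_prod, norm_zpow, ht]

end LaurentMonomial

section UnitTorus

variable {d : ℕ}

lemma torusMap_zero_one_apply (θ : Fin d → ℝ) (j : Fin d) :
    torusMap 0 (fun _ => 1) θ j = exp (θ j * I) := by
  simp [torusMap]

lemma continuous_laurentMon_torusMap (m : Fin d → ℤ) :
    Continuous fun θ : Fin d → ℝ => laurentMon m (torusMap 0 (fun _ => 1) θ) := by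
  simp only [laurentMon, torusMap_zero_one_apply]
  exact continuous_finsetProd _ fun j _ =>
    (by fun_prop : Continuous fun θ : Fin d → ℝ => exp (θ j * I)).zpow₀ _
      fun _ => Or.inl (exp_ne_zero _)

lemma integral_exp_mul_I_zpow (n : ℤ) :
    ∫ x in Icc (0 : ℝ) (2 * Real.pi), exp (x * I) ^ n =
      if n = 0 then (2 * Real.pi : ℂ) else 0 := by
  rw [integral_Icc_eq_integral_Ioc, ← intervalIntegral.integral_of_le Real.two_pi_pos.le]
  split_ifs with hn
  · simp [hn]
  · have hnI : (n : ℂ) * I ≠ 0 := by simp [hn]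
    have hexp : ∀ x : ℝ, exp (x * I) ^ n = exp (n * I * x) := fun x => by
      rw [← exp_int_mul]; ring_nf
    simp_rw [hexp]
    rw [integral_exp_mul_complex hnI]
    push_cast
    rw [show (n : ℂ) * I * (2 * Real.pi) = n * (2 * Real.pi * I) by ring, exp_int_mul_two_pi_mul_I]
    simp

lemma integral_laurentMon_torusMap (w : Fin d → ℤ) :
    ∫ θ in Icc (0 : Fin d → ℝ) (fun _ => 2 * Real.pi), laurentMon w (torusMap 0 (fun _ => 1) θ) =
      if w = 0 then (2 * Real.pi : ℂ) ^ d else 0 := by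
  simp_rw [laurentMon, torusMap_zero_one_apply]
  rw [← Set.pi_univ_Icc, volume_pi, Measure.restrict_pi_pi,
    integral_fintype_prod_eq_prod fun j (x : ℝ) => exp (x * I) ^ w j]
  simp_rw [Pi.zero_apply, integral_exp_mul_I_zpow, Finset.prod_ite_zero]
  simp [funext_iff]

lemma torusIntegral_mul_inv_prod (f : (Fin d → ℂ) → ℂ) :
    (∯ t in T((0 : Fin d → ℂ), fun _ => 1), f t * (∏ j, t j)⁻¹) =
      I ^ d * ∫ θ in Icc (0 : Fin d → ℝ) (fun _ => 2 * Real.pi), f (torusMap 0 (fun _ => 1) θ) := by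
  rw [torusIntegral, ← integral_const_mul]
  congr 1
  funext θ
  have hprod : ∏ j, exp (θ j * I) ≠ 0 := Finset.prod_ne_zero_iff.2 fun j _ => exp_ne_zero _
  simp only [torusMap_zero_one_apply, ofReal_one, one_mul, Finset.prod_mul_distrib,
    Finset.prod_const, Finset.card_univ, Fintype.card_fin, smul_eq_mul]
  rw [mul_comm (f _), mul_right_comm, mul_inv_cancel_left₀ hprod, mul_comm]

end UnitTorus

lemma integral_inv_one_sub_eq_tsum_integral_pow {α 𝕜 : Type*} [RCLike 𝕜] [MeasurableSpace α]
    {μ : Measure α} [IsFiniteMeasure μ] {f : α → 𝕜} (hf : AEStronglyMeasurable f μ) {r : ℝ}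
    (hr0 : 0 ≤ r) (hr1 : r < 1) (hfr : ∀ x, ‖f x‖ ≤ r) :
    ∫ x, (1 - f x)⁻¹ ∂μ = ∑' n : ℕ, ∫ x, f x ^ n ∂μ := by
  have hpow : ∀ n x, ‖f x ^ n‖ ≤ r ^ n := fun n x => by
    rw [norm_pow]; exact pow_le_pow_left₀ (norm_nonneg _) (hfr x) n
  have hint : ∀ n : ℕ, Integrable (fun x => f x ^ n) μ := fun n =>
    Integrable.of_bound (hf.pow n) (r ^ n) (Filter.Eventually.of_forall (hpow n))
  have hsum : Summable fun n : ℕ => ∫ x, ‖f x ^ n‖ ∂μ := by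
    refine Summable.of_nonneg_of_le (fun n => integral_nonneg fun x => norm_nonneg _)
      (fun n => ?_) ((summable_geometric_of_lt_one hr0 hr1).mul_right (μ.real univ))
    refine (le_abs_self _).trans ?_
    simpa only [Real.norm_eq_abs] using norm_integral_le_of_norm_le_const (μ := μ)
      (f := fun x => ‖f x ^ n‖)
      (Filter.Eventually.of_forall fun x => (norm_norm _).trans_le (hpow n x))
  rw [integral_tsum_of_summable_integral_norm hint hsum]
  congr 1
  funext x
  exact (tsum_geometric_of_norm_lt_one ((hfr x).trans_lt hr1)).symm

lemma factorial_sum_mul_prod_div_factorial {κ K : Type*} [Field K] [CharZero K] (s : Finset κ)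
    (l : κ → ℕ) (x : κ → K) :
    ((∑ m ∈ s, l m).factorial : K) * ∏ m ∈ s, x m ^ l m / (l m).factorial =
      Nat.multinomial s l * ∏ m ∈ s, x m ^ l m := by
  rw [← Nat.multinomial_spec, Finset.prod_div_distrib]
  have : (∏ m ∈ s, ((l m).factorial : K)) ≠ 0 :=
    Finset.prod_ne_zero_iff.2 fun m _ => Nat.cast_ne_zero.2 (Nat.factorial_ne_zero _)
  push_cast
  field_simp

section Expansion

variable {ι κ : Type*} [Fintype ι] [DecidableEq ι] [DecidableEq κ]

lemma prod_sum_pow_eq_sum_piFinset_piAntidiag {R : Type*} [CommSemiring R] (S : ι → Finset κ)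
    (x : ι → κ → R) (n : ℕ) :
    (∏ i, ∑ m ∈ S i, x i m) ^ n =
      ∑ l ∈ Fintype.piFinset fun i => (S i).piAntidiag n,
        ∏ i, (Nat.multinomial (S i) (l i) * ∏ m ∈ S i, x i m ^ l i m) := by
  rw [← Finset.prod_pow]
  simp_rw [Finset.sum_pow_eq_sum_piAntidiag]
  rw [Finset.prod_univ_sum]

end Expansion

section Hypergeometric

variable {ι : Type*} [Fintype ι] {d : ℕ} (S : ι → Finset (Fin d → ℤ)) (a : ι → (Fin d → ℤ) → ℂ)

def laurentProd (t : Fin d → ℂ) : ℂ := ∏ i, ∑ m ∈ S i, a i m * laurentMon m t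

lemma norm_laurentProd_le {t : Fin d → ℂ} (ht : ∀ j, ‖t j‖ = 1) :
    ‖laurentProd S a t‖ ≤ ∏ i, ∑ m ∈ S i, ‖a i m‖ := by
  rw [laurentProd, norm_prod]
  refine Finset.prod_le_prod (fun i _ => norm_nonneg _) fun i _ => (norm_sum_le _ _).trans ?_
  simp [norm_laurentMon ht]

lemma laurentProd_ne_one (hsmall : ∏ i, ∑ m ∈ S i, ‖a i m‖ < 1) {t : Fin d → ℂ}
    (ht : ∀ j, ‖t j‖ = 1) : laurentProd S a t ≠ 1 := fun h1 => by
  simpa [h1] using (norm_laurentProd_le S a ht).trans_lt hsmall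

def exponentWeight (l : ι → (Fin d → ℤ) → ℕ) : Fin d → ℤ := ∑ i, ∑ m ∈ S i, l i m • m

def hypergeomCoeff (l : ι → (Fin d → ℤ) → ℕ) : ℂ :=
  ∏ i, (Nat.multinomial (S i) (l i) * ∏ m ∈ S i, a i m ^ l i m)

def balancedExponents (i₀ : ι) : Set (ι → (Fin d → ℤ) → ℕ) :=
  {l | (∀ i m, m ∉ S i → l i m = 0) ∧ exponentWeight S l = 0 ∧
    ∀ i, ∑ m ∈ S i, l i m = ∑ m ∈ S i₀, l i₀ m}

variable [DecidableEq ι]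

def exponentsOfDegree (n : ℕ) : Finset (ι → (Fin d → ℤ) → ℕ) :=
  Fintype.piFinset fun i => (S i).piAntidiag n

def balancedExponentsOfDegree (n : ℕ) : Finset (ι → (Fin d → ℤ) → ℕ) :=
  (exponentsOfDegree S n).filter fun l => exponentWeight S l = 0

lemma mem_balancedExponentsOfDegree_iff (i₀ : ι) (n : ℕ) (l : ι → (Fin d → ℤ) → ℕ) :
    l ∈ balancedExponentsOfDegree S n ↔ l ∈ balancedExponents S i₀ ∧ ∑ m ∈ S i₀, l i₀ m = n := by
  simp only [balancedExponentsOfDegree, exponentsOfDegree, Finset.mem_filter,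
    Fintype.mem_piFinset, Finset.mem_piAntidiag, balancedExponents, Set.mem_ofPred_eq]
  constructor
  · rintro ⟨hdeg, hw⟩
    exact ⟨⟨fun i m => not_imp_comm.1 ((hdeg i).2 m), hw,
      fun i => (hdeg i).1.trans (hdeg i₀).1.symm⟩, (hdeg i₀).1⟩
  · rintro ⟨⟨hsupp, hw, hlevel⟩, rfl⟩
    exact ⟨fun i => ⟨hlevel i, fun m => not_imp_comm.1 (hsupp i m)⟩, hw⟩

lemma laurentProd_pow {t : Fin d → ℂ} (ht : ∀ j, t j ≠ 0) (n : ℕ) :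
    laurentProd S a t ^ n =
      ∑ l ∈ exponentsOfDegree S n, hypergeomCoeff S a l * laurentMon (exponentWeight S l) t := by
  rw [laurentProd, prod_sum_pow_eq_sum_piFinset_piAntidiag, exponentsOfDegree]
  refine Finset.sum_congr rfl fun l _ => ?_
  simp only [exponentWeight, hypergeomCoeff, laurentMon_sum ht, laurentMon_nsmul, mul_pow,
    Finset.prod_mul_distrib, mul_assoc]

lemma sum_norm_hypergeomCoeff (n : ℕ) :
    ∑ l ∈ exponentsOfDegree S n, ‖hypergeomCoeff S a l‖ = (∏ i, ∑ m ∈ S i, ‖a i m‖) ^ n := by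
  rw [prod_sum_pow_eq_sum_piFinset_piAntidiag, exponentsOfDegree]
  refine Finset.sum_congr rfl fun l _ => ?_
  simp [hypergeomCoeff, norm_prod]

lemma summable_sum_norm_hypergeomCoeff (hsmall : ∏ i, ∑ m ∈ S i, ‖a i m‖ < 1) :
    Summable fun n => ∑ l ∈ balancedExponentsOfDegree S n, ‖hypergeomCoeff S a l‖ :=
  Summable.of_nonneg_of_le (fun _ => Finset.sum_nonneg fun _ _ => norm_nonneg _)
    (fun n => (Finset.sum_le_sum_of_subset_of_nonneg (Finset.filter_subset _ _)
      fun _ _ _ => norm_nonneg _).trans (sum_norm_hypergeomCoeff S a n).le)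
    (summable_geometric_of_lt_one (Finset.prod_nonneg fun _ _ =>
      Finset.sum_nonneg fun _ _ => norm_nonneg _) hsmall)

lemma integral_laurentProd_torusMap_pow (n : ℕ) :
    ∫ θ in Icc (0 : Fin d → ℝ) (fun _ => 2 * Real.pi),
        laurentProd S a (torusMap 0 (fun _ => 1) θ) ^ n =
      (2 * Real.pi : ℂ) ^ d * ∑ l ∈ balancedExponentsOfDegree S n, hypergeomCoeff S a l := by
  have hexpand : (fun θ => laurentProd S a (torusMap 0 (fun _ => 1) θ) ^ n) = fun θ =>
      ∑ l ∈ exponentsOfDegree S n,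
        hypergeomCoeff S a l * laurentMon (exponentWeight S l) (torusMap 0 (fun _ => 1) θ) :=
    funext fun θ => laurentProd_pow S a (fun j => by
      rw [torusMap_zero_one_apply]; exact exp_ne_zero _) n
  rw [hexpand, integral_finsetSum]
  swap
  · exact fun l _ => (continuous_const.mul (continuous_laurentMon_torusMap _)).integrableOn_Icc
  simp_rw [integral_const_mul, integral_laurentMon_torusMap, mul_ite, mul_zero,
    ← Finset.sum_filter, Finset.mul_sum, mul_comm]
  rfl

lemma torusIntegral_inv_one_sub_laurentProd (hsmall : ∏ i, ∑ m ∈ S i, ‖a i m‖ < 1) :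
    1 / (2 * (Real.pi : ℂ) * I) ^ d *
        (∯ t in T((0 : Fin d → ℂ), fun _ => 1), (1 - laurentProd S a t)⁻¹ * (∏ j, t j)⁻¹) =
      ∑' n, ∑ l ∈ balancedExponentsOfDegree S n, hypergeomCoeff S a l := by
  have hnorm : ∀ θ, ‖laurentProd S a (torusMap 0 (fun _ => 1) θ)‖ ≤ ∏ i, ∑ m ∈ S i, ‖a i m‖ :=
    fun θ => norm_laurentProd_le S a fun j => by
      rw [torusMap_zero_one_apply]; exact norm_exp_ofReal_mul_I _
  have hcont : Continuous fun θ : Fin d → ℝ => laurentProd S a (torusMap 0 (fun _ => 1) θ) :=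
    continuous_finsetProd _ fun i _ => continuous_finsetSum _ fun m _ =>
      continuous_const.mul (continuous_laurentMon_torusMap m)
  have : IsFiniteMeasure (volume.restrict (Icc (0 : Fin d → ℝ) fun _ => 2 * Real.pi)) :=
    isFiniteMeasure_restrict.2 measure_Icc_lt_top.ne
  rw [torusIntegral_mul_inv_prod, integral_inv_one_sub_eq_tsum_integral_pow
    hcont.aestronglyMeasurable (Finset.prod_nonneg fun _ _ =>
      Finset.sum_nonneg fun _ _ => norm_nonneg _) hsmall hnorm]
  simp_rw [integral_laurentProd_torusMap_pow, tsum_mul_left]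
  have hπ : (2 * Real.pi : ℂ) ≠ 0 := by simp [Real.pi_ne_zero]
  rw [mul_pow, ← mul_assoc, ← mul_assoc]
  field_simp

end Hypergeometric

section Regrouping

variable {α E : Type*} {L : Set α} (T : ℕ → Finset α) {deg : α → ℕ}
  (hT : ∀ n l, l ∈ T n ↔ l ∈ L ∧ deg l = n)
include hT

def gradedSigmaEquiv : (Σ n, T n) ≃ L where
  toFun x := ⟨x.2, ((hT _ _).1 x.2.2).1⟩
  invFun l := ⟨deg l, l, (hT _ _).2 ⟨l.2, rfl⟩⟩
  left_inv := by
    rintro ⟨n, l, hl⟩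
    obtain rfl := ((hT n l).1 hl).2
    rfl
  right_inv _ := rfl

variable [NormedAddCommGroup E] {f : α → E}
  (hf : Summable fun n => ∑ l ∈ T n, ‖f l‖)
include hf

lemma summable_norm_subtype_of_graded : Summable fun l : L => ‖f l‖ := by
  refine (gradedSigmaEquiv T hT).summable_iff.1 ?_
  change Summable fun x : Σ n, T n => ‖f x.2‖
  refine (summable_sigma_of_nonneg fun _ => norm_nonneg _).2 ⟨fun n => Summable.of_finite, ?_⟩
  exact hf.congr fun n => (Finset.tsum_subtype (T n) fun l => ‖f l‖).symm

lemma tsum_subtype_eq_tsum_sum_of_graded [CompleteSpace E] :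
    ∑' l : L, f l = ∑' n, ∑ l ∈ T n, f l := by
  have hsig : Summable fun x : Σ n, T n => f x.2 :=
    ((gradedSigmaEquiv T hT).summable_iff.2 (summable_norm_subtype_of_graded T hT hf)).of_norm
  rw [← (gradedSigmaEquiv T hT).tsum_eq]
  change ∑' x : Σ n, T n, f x.2 = _
  rw [hsig.tsum_sigma]
  exact tsum_congr fun n => Finset.tsum_subtype (T n) f

end Regrouping

theorem main_period_degeneration_general {d k : ℕ}
    (Δ : Fin (k+1) → Set (Fin d → ℝ))
    (hlat : ∀ i, IsLatticePolytope (Δ i))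
    (a : Fin (k+1) → (Fin d → ℤ) → ℂ)
    (hsmall : ∏ i, (∑ᶠ m ∈ LP (Δ i), ‖a i m‖) < 1)
    -- g(t) = 1 − ∏ᵢ (Σ_{m ∈ Δᵢ ∩ ℤ^d} a_{i,m} tᵐ)
    (g : (Fin d → ℂ) → ℂ)
    (hg : g = fun t => 1 - ∏ i, (∑ᶠ m ∈ LP (Δ i), a i m * ∏ j, t j ^ (m j)))
    -- L = {(l_{i,m}) : Σ_{i,m} l_{i,m}·m = 0 and all level sums are equal}
    (L : Set (Fin (k+1) → (Fin d → ℤ) → ℕ))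
    (hL : L = {l | (∀ i, ∀ m, m ∉ LP (Δ i) → l i m = 0) ∧
        (∑ i, ∑ᶠ m ∈ LP (Δ i), (l i m) • m) = 0 ∧
        (∀ i, (∑ᶠ m ∈ LP (Δ i), l i m) = ∑ᶠ m ∈ LP (Δ 0), l 0 m)})
    -- the general term of the hypergeometric series
    (F : (Fin (k+1) → (Fin d → ℤ) → ℕ) → ℂ)
    (hF : F = fun l => ∏ i,
        ((Nat.factorial (∑ᶠ m ∈ LP (Δ i), l i m) : ℂ) *
          ∏ᶠ m ∈ LP (Δ i), (a i m ^ (l i m) / (Nat.factorial (l i m) : ℂ)))) :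
    -- g does not vanish on the real torus
    (∀ t : Fin d → ℂ, (∀ j, ‖t j‖ = 1) → g t ≠ 0) ∧
    -- the series converges absolutely
    Summable (fun l : L => ‖F l‖) ∧
    -- the Euler integral equals the hypergeometric series
    (1 / (2 * (Real.pi : ℂ) * Complex.I) ^ d) *
        (∯ t in T((0 : Fin d → ℂ), fun _ => 1), (g t)⁻¹ * (∏ j, t j)⁻¹) =
      ∑' l : L, F l := by
  classical
  choose S hS using fun i => (hlat i).finite_LP.exists_finset_coe
  simp only [← hS, Finset.mem_coe, finsum_mem_finset_eq_sum, finprod_mem_finset_eq_prod]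
    at hsmall hg hL hF
  have hF' : F = hypergeomCoeff S a := by
    rw [hF]
    funext l
    exact Finset.prod_congr rfl fun i _ => factorial_sum_mul_prod_div_factorial _ _ _
  obtain rfl : g = fun t => 1 - laurentProd S a t := hg
  obtain rfl : L = balancedExponents S 0 := hL
  subst hF'
  have hgraded := mem_balancedExponentsOfDegree_iff S 0
  have hsum := summable_sum_norm_hypergeomCoeff S a hsmall
  refine ⟨fun t ht => sub_ne_zero.2 (laurentProd_ne_one S a hsmall ht).symm,
    summable_norm_subtype_of_graded _ hgraded hsum, ?_⟩
  rw [torusIntegral_inv_one_sub_laurentProd S a hsmall,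
    tsum_subtype_eq_tsum_sum_of_graded _ hgraded hsum]

/-- the main period of the degenerate Calabi–Yau hypersurface
`g = 1 − ∏ᵢ(Σ_{m ∈ Δᵢ∩ℤ^d} a_{i,m}tᵐ)` equals the hypergeometric series of the
Calabi–Yau complete intersection of the nef-partition `Δ̃₀ + ⋯ + Δ̃_k`. -/
theorem main_period_degeneration {d k : ℕ}
    (Δ : Fin (k+1) → Set (Fin d → ℝ))
    (hlat : ∀ i, IsLatticePolytope (Δ i))
    (hrefl : IsReflexive (∑ i, Δ i))
    (a : Fin (k+1) → (Fin d → ℤ) → ℂ)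
    (hsmall : ∏ i, (∑ᶠ m ∈ LP (Δ i), ‖a i m‖) < 1)
    -- g(t) = 1 − ∏ᵢ (Σ_{m ∈ Δᵢ ∩ ℤ^d} a_{i,m} tᵐ)
    (g : (Fin d → ℂ) → ℂ)
    (hg : g = fun t => 1 - ∏ i, (∑ᶠ m ∈ LP (Δ i), a i m * ∏ j, t j ^ (m j)))
    -- L = {(l_{i,m}) : Σ_{i,m} l_{i,m}·m = 0 and all level sums are equal}
    (L : Set (Fin (k+1) → (Fin d → ℤ) → ℕ))
    (hL : L = {l | (∀ i, ∀ m, m ∉ LP (Δ i) → l i m = 0) ∧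
        (∑ i, ∑ᶠ m ∈ LP (Δ i), (l i m) • m) = 0 ∧
        (∀ i, (∑ᶠ m ∈ LP (Δ i), l i m) = ∑ᶠ m ∈ LP (Δ 0), l 0 m)})
    -- the general term of the hypergeometric series
    (F : (Fin (k+1) → (Fin d → ℤ) → ℕ) → ℂ)
    (hF : F = fun l => ∏ i,
        ((Nat.factorial (∑ᶠ m ∈ LP (Δ i), l i m) : ℂ) *
          ∏ᶠ m ∈ LP (Δ i), (a i m ^ (l i m) / (Nat.factorial (l i m) : ℂ)))) :
    -- g does not vanish on the real torus
    (∀ t : Fin d → ℂ, (∀ j, ‖t j‖ = 1) → g t ≠ 0) ∧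
    -- the series converges absolutely
    Summable (fun l : L => ‖F l‖) ∧
    -- the Euler integral equals the hypergeometric series
    (1 / (2 * (Real.pi : ℂ) * Complex.I) ^ d) *
        (∯ t in T((0 : Fin d → ℂ), fun _ => 1), (g t)⁻¹ * (∏ j, t j)⁻¹) =
      ∑' l : L, F l :=
  main_period_degeneration_general Δ hlat a hsmall g hg L hL F hF
end
end
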